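/- In the extended twisted Yangian X_N, for 1 ≤ i < j < N one has e_{i,j+1}(u) = [e_{ij}(u), e_{j,j+1}^{(1)}] and f_{j+1,i}(u) = [f_{j+1,j}^{(1)}, f_{ji}(u)]. Consequently, X_N (and likewise the twisted Yangian Y_N) is generated by the coefficients of d_i(u) (1 ≤ i ≤ N), e_j(u), and f_j(u) (1 ≤ j < N). -/

import Mathlib

noncomputable section

namespace TY

variable {A : Type*} [Ring A] [Algebra ℂ A]

/-- For `f(u) = Σ_{r≥0} a_r u^{-r}` (recorded as the power series `Σ a_r x^r` in
`x = u⁻¹`), this is the series `f(-u)`. -/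
def negVar (f : PowerSeries A) : PowerSeries A :=
  PowerSeries.mk fun n => ((-1 : ℂ) ^ n) • PowerSeries.coeff n f

/-- For `f(u) = Σ_{r≥0} a_r u^{-r}`, this is the series `f(u + c)`, expanded again
in powers of `u⁻¹`. -/
def shiftVar (c : ℂ) (f : PowerSeries A) : PowerSeries A :=
  PowerSeries.mk fun n => ∑ r ∈ Finset.range (n + 1),
    ((-1 : ℂ) ^ (n - r) * ((n - 1).choose (n - r) : ℂ) * c ^ (n - r)) •
      PowerSeries.coeff r f

open Classical in
/-- A series in the single variable `u⁻¹`, viewed as a two-variable series placed in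
the `k`-th variable. -/
def inVar (k : Fin 2) (f : PowerSeries A) : MvPowerSeries (Fin 2) A := fun m =>
  if m = Finsupp.single k (m k) then PowerSeries.coeff (m k) f else 0

/-- `f(u)` as a series in the two variables `x = u⁻¹`, `y = v⁻¹`. -/
abbrev inX (f : PowerSeries A) : MvPowerSeries (Fin 2) A := inVar 0 f

/-- `f(v)` as a series in the two variables `x = u⁻¹`, `y = v⁻¹`. -/
abbrev inY (f : PowerSeries A) : MvPowerSeries (Fin 2) A := inVar 1 f

/-- `x = u⁻¹` as a two-variable series. -/
def Xv : MvPowerSeries (Fin 2) A := MvPowerSeries.X 0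

/-- `y = v⁻¹` as a two-variable series. -/
def Yv : MvPowerSeries (Fin 2) A := MvPowerSeries.X 1

/-- The left-hand side `(u²-v²)[s_{ij}(u), s_{kl}(v)]` of the quaternary relation,
multiplied by `x²y²` (where `x = u⁻¹`, `y = v⁻¹`) to clear negative powers. -/
def quatLHS {N : ℕ} (s : Fin N → Fin N → PowerSeries A) (i j k l : Fin N) :
    MvPowerSeries (Fin 2) A :=
  (Yv ^ 2 - Xv ^ 2) * ⁅inX (s i j), inY (s k l)⁆

/-- The right-hand side of the quaternary relation, multiplied by `x²y²`. -/
def quatRHS {N : ℕ} (s : Fin N → Fin N → PowerSeries A) (i j k l : Fin N) :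
    MvPowerSeries (Fin 2) A :=
  Xv * Yv * (Xv + Yv) * (inX (s k j) * inY (s i l) - inY (s k j) * inX (s i l))
    - Xv * Yv * (Yv - Xv) * (inX (s i k) * inY (s j l) - inY (s k i) * inX (s l j))
    + Xv ^ 2 * Yv ^ 2 * (inX (s k i) * inY (s j l) - inY (s k i) * inX (s j l))

/-- The quaternary relation (2.2). -/
def QuatRel {N : ℕ} (s : Fin N → Fin N → PowerSeries A) : Prop :=
  ∀ i j k l : Fin N, quatLHS s i j k l = quatRHS s i j k l

/-- `s_{ij}(u) = δ_{ij} + Σ_{r≥1} s_{ij}^{(r)} u^{-r}`. -/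
def HasDeltaConst {N : ℕ} (s : Fin N → Fin N → PowerSeries A) : Prop :=
  ∀ i j : Fin N, PowerSeries.constantCoeff (s i j) = if i = j then 1 else 0

/-- The symmetry relation `s_{ji}(-u) = s_{ij}(u) + (s_{ij}(u) - s_{ij}(-u))/(2u)`. -/
def SymRel {N : ℕ} (s : Fin N → Fin N → PowerSeries A) : Prop :=
  ∀ i j : Fin N,
    negVar (s j i)
      = s i j + (2 : ℂ)⁻¹ • (PowerSeries.X * (s i j - negVar (s i j)))

/-- The upper unitriangular matrix `E(u)` with entries `e_{ij}(u)`, `i < j`. -/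
def upperMat {N : ℕ} (e : Fin N → Fin N → PowerSeries A) :
    Matrix (Fin N) (Fin N) (PowerSeries A) :=
  Matrix.of fun i j => if i = j then 1 else if i < j then e i j else 0

/-- The lower unitriangular matrix `F(u)` with entries `f_{ji}(u)`, `i < j`. -/
def lowerMat {N : ℕ} (f : Fin N → Fin N → PowerSeries A) :
    Matrix (Fin N) (Fin N) (PowerSeries A) :=
  Matrix.of fun i j => if i = j then 1 else if j < i then f i j else 0

/-- The (unique) Gauss decomposition `S(u) = F(u) D(u) E(u)`: `D(u)` diagonal with
entries `d_i(u)` having constant term `1`, `E(u)` upper unitriangular with entries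
`e_{ij}(u)` (for `i < j`), `F(u)` lower unitriangular with entries `f_{ji}(u)`. -/
structure IsGaussDecomp {N : ℕ} (s : Fin N → Fin N → PowerSeries A)
    (d : Fin N → PowerSeries A) (e f : Fin N → Fin N → PowerSeries A) : Prop where
  d_const : ∀ i, PowerSeries.constantCoeff (d i) = 1
  e_const : ∀ i j : Fin N, i < j → PowerSeries.constantCoeff (e i j) = 0
  f_const : ∀ i j : Fin N, i < j → PowerSeries.constantCoeff (f j i) = 0
  decomp : Matrix.of s = lowerMat f * Matrix.diagonal d * upperMat e

/-- `b_{ji}(u) = f_{ji}(u - i/2)`; the indices `j i` here are 0-based, so the paper's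
(1-based) index `i` equals `(i : ℕ) + 1`. -/
def bSeriesAt {N : ℕ} (f : Fin N → Fin N → PowerSeries A) (j i : Fin N) :
    PowerSeries A :=
  shiftVar (-(((i : ℕ) : ℂ) + 1) / 2) (f j i)

/-- `h_0(u) = d_1(u)` and, for `k ≥ 1`, `h_k(u) = d̃_k(u - k/2) d_{k+1}(u - k/2)`;
the index `k` here is the paper's index, while the entries of `d`, `dt` are indexed
0-based (so the paper's `d_m` is `d ⟨m-1⟩`). -/
def hSeriesAt {N : ℕ} (d dt : Fin N → PowerSeries A) (k : Fin N) :
    PowerSeries A :=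
  if _h : (k : ℕ) = 0 then d k
  else
    shiftVar (-((k : ℕ) : ℂ) / 2) (dt ⟨(k : ℕ) - 1, by have := k.isLt; omega⟩) *
      shiftVar (-((k : ℕ) : ℂ) / 2) (d k)

/-- The free algebra on the generators `s_{ij}^{(r)}`, `r ≥ 1` (the triple
`(i, j, n)` encodes `s_{ij}^{(n+1)}`). -/
abbrev FA (N : ℕ) := FreeAlgebra ℂ (Fin N × Fin N × ℕ)

/-- The generating series `s_{ij}(u)` of the free algebra. -/
def sFree (N : ℕ) (i j : Fin N) : PowerSeries (FA N) :=
  PowerSeries.mk fun r =>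
    match r with
    | 0 => if i = j then 1 else 0
    | n + 1 => FreeAlgebra.ι ℂ (i, j, n)

/-- The defining relations of the extended twisted Yangian `X_N`: all coefficients
of the quaternary relations. -/
inductive XRel (N : ℕ) : FA N → FA N → Prop
  | quat (i j k l : Fin N) (m : Fin 2 →₀ ℕ) :
      XRel N (MvPowerSeries.coeff m (quatLHS (sFree N) i j k l))
        (MvPowerSeries.coeff m (quatRHS (sFree N) i j k l))

/-- The extended twisted Yangian `X_N`. -/
abbrev Xt (N : ℕ) := RingQuot (XRel N)

/-- The generating series `s_{ij}(u)` of `X_N`. -/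
def sX (N : ℕ) (i j : Fin N) : PowerSeries (Xt N) :=
  PowerSeries.map (RingQuot.mkRingHom (XRel N)) (sFree N i j)

/-- The defining relations of the twisted Yangian `Y_N`: the quaternary relations
together with the symmetry relation `s_{11}(u) = s_{11}(-u)`. -/
inductive YRel (N : ℕ) : FA N → FA N → Prop
  | quat (i j k l : Fin N) (m : Fin 2 →₀ ℕ) :
      YRel N (MvPowerSeries.coeff m (quatLHS (sFree N) i j k l))
        (MvPowerSeries.coeff m (quatRHS (sFree N) i j k l))
  | symm (h : 0 < N) (n : ℕ) :
      YRel N (PowerSeries.coeff n (sFree N ⟨0, h⟩ ⟨0, h⟩))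
        (PowerSeries.coeff n (negVar (sFree N ⟨0, h⟩ ⟨0, h⟩)))

/-- The twisted Yangian `Y_N`. -/
abbrev Yt (N : ℕ) := RingQuot (YRel N)

/-- The generating series `s_{ij}(u)` of `Y_N`. -/
def sY (N : ℕ) (i j : Fin N) : PowerSeries (Yt N) :=
  PowerSeries.map (RingQuot.mkRingHom (YRel N)) (sFree N i j)

/-- `x` is fixed by every (auto)morphism `ν_g : S(u) ↦ g(u) S(u)` of `Y_N`, where
`g(u) ∈ 1 + u⁻²ℂ[[u⁻²]]`. -/
def SYcond (N : ℕ) (x : Yt N) : Prop :=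
  ∀ (φ : Yt N →ₐ[ℂ] Yt N) (g : PowerSeries ℂ),
    PowerSeries.constantCoeff g = 1 →
    (∀ n : ℕ, PowerSeries.coeff (2 * n + 1) g = 0) →
    (∀ i j : Fin N,
      PowerSeries.map (φ : Yt N →+* Yt N) (sY N i j)
        = PowerSeries.map (algebraMap ℂ (Yt N)) g * sY N i j) →
    φ x = x

/-- The special twisted Yangian `SY_N`, as the subalgebra of `Y_N` of elements
stable under all automorphisms `ν_g`. -/
def specialSubalgebra (N : ℕ) : Subalgebra ℂ (Yt N) where
  carrier := {x | SYcond N x}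
  mul_mem' := fun ha hb φ g h1 h2 h3 => by
    rw [map_mul, ha φ g h1 h2 h3, hb φ g h1 h2 h3]
  one_mem' := fun φ _ _ _ _ => map_one φ
  add_mem' := fun ha hb φ g h1 h2 h3 => by
    rw [map_add, ha φ g h1 h2 h3, hb φ g h1 h2 h3]
  zero_mem' := fun φ _ _ _ _ => map_zero φ
  algebraMap_mem' := fun c φ _ _ _ _ => φ.commutes c

/-- `x < y` for an explicitly given linear order. -/
def ltOf {G : Type*} (L : LinearOrder G) (x y : G) : Prop :=
  L.toPartialOrder.toPreorder.toLT.lt x y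

/-- The ordered monomial attached to a finitely supported exponent function `m`,
with the generators multiplied in increasing order relative to the linear order
`L`. -/
def orderedMonomial {R : Type*} [Ring R] {G : Type*} (L : LinearOrder G)
    (elem : G → R) (m : G →₀ ℕ) : R :=
  letI := L
  ((m.support.sort (· ≤ ·)).map fun g => elem g ^ m g).prod

/-!
Comparing coefficients of `u⁻ᵖ⁻² v⁻¹` in the quaternary relation gives
`[s_{ij}^{(p)}, s_{kl}^{(1)}] = δ_{kj} s_{il}^{(p)} - δ_{il} s_{kj}^{(p)} + δ_{ki} s_{lj}^{(p)}
  - δ_{jl} s_{ik}^{(p)}`.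
So `z = s_{j,j+1}^{(1)} = e_{j,j+1}^{(1)}` commutes with the leading `j × j` block of `S(u)`, hence
with the factors of its Gauss decomposition, and `[·, z]` shifts the `j`-th column of `S(u)`
above the diagonal to the `(j+1)`-st. Expanding `s_{ij} = Σ_{c<i} f_{ic} d_c e_{cj} + d_i e_{ij}`
and inducting on `i` turns this into `[e_{ij}(u), z] = e_{i,j+1}(u)`; the same argument in the
opposite ring, applied to the transposed decomposition `Sᵀ = Eᵀ Dᵀ Fᵀ`, handles `f`. Iterating,
all `e_{ij}`, `f_{ji}` and therefore all entries of `S = F D E` have coefficients in the algebra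
generated by the coefficients of the `d_i`, `e_i`, `f_i`.
-/

section LDU

open Finset MulOpposite

theorem commute_of_isUnit_mul {M : Type*} [Monoid M] {z u x : M} (hu : IsUnit u)
    (hzu : Commute z u) (h : Commute z (u * x)) : Commute z x := by
  obtain ⟨u, rfl⟩ := hu
  simpa using hzu.units_inv_right.mul_right h

theorem commute_of_mul_isUnit {M : Type*} [Monoid M] {z u x : M} (hu : IsUnit u)
    (hzu : Commute z u) (h : Commute z (x * u)) : Commute z x := by
  obtain ⟨u, rfl⟩ := hu
  simpa [mul_assoc] using h.mul_right hzu.units_inv_right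

theorem lie_mul_of_commute {R : Type*} [Ring R] {a b z : R} (h : Commute z a) :
    ⁅a * b, z⁆ = a * ⁅b, z⁆ := by
  rw [Ring.lie_def, Ring.lie_def, mul_sub, ← mul_assoc z, h.eq, mul_assoc, mul_assoc]

theorem op_lie {R : Type*} [Ring R] (a b : R) : ⁅op a, op b⁆ = op ⁅b, a⁆ := by
  simp only [Ring.lie_def, op_sub, op_mul]

structure IsLDU {R ι : Type*} [Ring R] [Fintype ι] [LinearOrder ι]
    (s L : ι → ι → R) (d : ι → R) (U : ι → ι → R) : Prop where
  lower_diag : ∀ a, L a a = 1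
  lower_eq_zero : ∀ a c, a < c → L a c = 0
  upper_diag : ∀ c, U c c = 1
  upper_eq_zero : ∀ c b, b < c → U c b = 0
  isUnit : ∀ c, IsUnit (d c)
  eq_sum : ∀ a b, s a b = ∑ c, L a c * d c * U c b

namespace IsLDU

variable {R ι : Type*} [Ring R] [Fintype ι] [LinearOrder ι] {s L U : ι → ι → R} {d : ι → R}

theorem op_transpose (h : IsLDU s L d U) :
    IsLDU (fun a b => op (s b a)) (fun a c => op (U c a)) (fun c => op (d c))
      (fun c b => op (L b c)) where
  lower_diag a := by simp [h.upper_diag]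
  lower_eq_zero a c hac := by simp [h.upper_eq_zero c a hac]
  upper_diag c := by simp [h.lower_diag]
  upper_eq_zero c b hbc := by simp [h.lower_eq_zero b c hbc]
  isUnit c := (h.isUnit c).op
  eq_sum a b := by simp only [h.eq_sum b a, op_sum, op_mul, mul_assoc]

variable [LocallyFiniteOrderBot ι]

theorem eq_sum_Iio_add_mul_upper (h : IsLDU s L d U) (a b : ι) :
    s a b = ∑ c ∈ Iio a, L a c * d c * U c b + d a * U a b := by
  rw [h.eq_sum, ← sum_subset (subset_univ (Iic a)), ← Iio_insert, sum_insert notMem_Iio_self,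
    h.lower_diag, one_mul, add_comm]
  intro c _ hc
  rw [h.lower_eq_zero a c (not_le.mp (by simpa using hc)), zero_mul, zero_mul]

theorem eq_sum_Iio_add_lower_mul (h : IsLDU s L d U) (a b : ι) :
    s a b = ∑ c ∈ Iio b, L a c * d c * U c b + L a b * d b := by
  rw [h.eq_sum, ← sum_subset (subset_univ (Iic b)), ← Iio_insert, sum_insert notMem_Iio_self,
    h.upper_diag, mul_one, add_comm]
  intro c _ hc
  rw [h.upper_eq_zero c b (not_le.mp (by simpa using hc)), mul_zero]

/-- The Gauss decomposition of the leading block `(s a b)_{a, b < j}` is the leading block of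
that of `s`. -/
theorem commute_factors_of_commute_lt (h : IsLDU s L d U) {z : R} {j : ι}
    (hz : ∀ a b, a < j → b < j → Commute z (s a b)) (c : ι) (hc : c < j) :
    Commute z (d c) ∧ (∀ b, b < j → Commute z (U c b)) ∧ (∀ a, a < j → Commute z (L a c)) := by
  induction c using WellFoundedLT.induction with
  | _ c ih =>
  have hrow : ∀ b, b < j → Commute z (d c * U c b) := by
    intro b hb
    rw [eq_sub_of_add_eq' (h.eq_sum_Iio_add_mul_upper c b).symm]
    refine (hz c b hc hb).sub_right (Commute.sum_right _ _ _ fun c' hc' => ?_)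
    obtain ⟨hd', hU', hL'⟩ := ih c' (mem_Iio.mp hc') ((mem_Iio.mp hc').trans hc)
    exact ((hL' c hc).mul_right hd').mul_right (hU' b hb)
  have hd : Commute z (d c) := by simpa [h.upper_diag] using hrow c hc
  refine ⟨hd, fun b hb => commute_of_isUnit_mul (h.isUnit c) hd (hrow b hb),
    fun a ha => commute_of_mul_isUnit (h.isUnit c) hd ?_⟩
  rw [eq_sub_of_add_eq' (h.eq_sum_Iio_add_lower_mul a c).symm]
  refine (hz a c ha hc).sub_right (Commute.sum_right _ _ _ fun c' hc' => ?_)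
  obtain ⟨hd', hU', hL'⟩ := ih c' (mem_Iio.mp hc') ((mem_Iio.mp hc').trans hc)
  exact ((hL' a ha).mul_right hd').mul_right (hU' c hc)

theorem lie_upper_eq (h : IsLDU s L d U) {z : R} {j k : ι}
    (hz : ∀ a b, a < j → b < j → Commute z (s a b))
    (hs : ∀ i, i < j → ⁅s i j, z⁆ = s i k) (i : ι) (hi : i < j) : ⁅U i j, z⁆ = U i k := by
  induction i using WellFoundedLT.induction with
  | _ i ih =>
  have hcomm := h.commute_factors_of_commute_lt hz
  have hsum : ∑ c ∈ Iio i, ⁅L i c * d c * U c j, z⁆ = ∑ c ∈ Iio i, L i c * d c * U c k := by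
    refine sum_congr rfl fun c hc => ?_
    have hcj := (mem_Iio.mp hc).trans hi
    rw [lie_mul_of_commute (((hcomm c hcj).2.2 i hi).mul_right (hcomm c hcj).1),
      ih c (mem_Iio.mp hc) hcj]
  have hexpand : ⁅s i j, z⁆ = ∑ c ∈ Iio i, ⁅L i c * d c * U c j, z⁆ + ⁅d i * U i j, z⁆ := by
    rw [h.eq_sum_Iio_add_mul_upper i j]
    simp only [Ring.lie_def, add_mul, mul_add, sum_mul, mul_sum, sum_sub_distrib]
    abel
  have := hs i hi
  rw [hexpand, hsum, lie_mul_of_commute (hcomm i hi).1, h.eq_sum_Iio_add_mul_upper i k] at this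
  exact (h.isUnit i).mul_left_cancel (add_left_cancel this)

theorem lie_lower_eq (h : IsLDU s L d U) {z : R} {j k : ι}
    (hz : ∀ a b, a < j → b < j → Commute z (s a b))
    (hs : ∀ i, i < j → ⁅z, s j i⁆ = s k i) (i : ι) (hi : i < j) : ⁅z, L j i⁆ = L k i := by
  have := h.op_transpose.lie_upper_eq (z := op z) (fun a b ha hb => (hz b a hb ha).op)
    (fun i hi => by rw [op_lie, hs i hi]) i hi
  rw [op_lie] at this
  exact op_injective this

end IsLDU

end LDU

section TwoVariables

open MvPowerSeries

variable {A : Type*} [Ring A]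

def bidegree (p q : ℕ) : Fin 2 →₀ ℕ := Finsupp.single 0 p + Finsupp.single 1 q

@[simp] theorem bidegree_apply_zero (p q : ℕ) : bidegree p q 0 = p := by simp [bidegree]

@[simp] theorem bidegree_apply_one (p q : ℕ) : bidegree p q 1 = q := by simp [bidegree]

theorem finsupp_fin_two_ext {m n : Fin 2 →₀ ℕ} (h0 : m 0 = n 0) (h1 : m 1 = n 1) : m = n := by
  ext a
  fin_cases a <;> assumption

theorem bidegree_le_bidegree {a b p q : ℕ} : bidegree a b ≤ bidegree p q ↔ a ≤ p ∧ b ≤ q := by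
  refine ⟨fun h => ⟨by simpa using h 0, by simpa using h 1⟩, fun ⟨ha, hb⟩ i => ?_⟩
  fin_cases i <;> simpa

theorem Xv_pow_mul_Yv_pow (a b : ℕ) :
    (Xv ^ a * Yv ^ b : MvPowerSeries (Fin 2) A) = monomial (bidegree a b) 1 := by
  rw [Xv, Yv, X_pow_eq, X_pow_eq, monomial_mul_monomial, one_mul, bidegree]

theorem bidegree_add (a b c d : ℕ) : bidegree a b + bidegree c d = bidegree (a + c) (b + d) :=
  finsupp_fin_two_ext (by simp) (by simp)

theorem Xv_pow_eq (a : ℕ) : (Xv ^ a : MvPowerSeries (Fin 2) A) = monomial (bidegree a 0) 1 := by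
  simpa using Xv_pow_mul_Yv_pow (A := A) a 0

theorem Yv_pow_eq (b : ℕ) : (Yv ^ b : MvPowerSeries (Fin 2) A) = monomial (bidegree 0 b) 1 := by
  simpa using Xv_pow_mul_Yv_pow (A := A) 0 b

theorem Xv_eq : (Xv : MvPowerSeries (Fin 2) A) = monomial (bidegree 1 0) 1 := by
  simpa using Xv_pow_eq (A := A) 1

theorem Yv_eq : (Yv : MvPowerSeries (Fin 2) A) = monomial (bidegree 0 1) 1 := by
  simpa using Yv_pow_eq (A := A) 1

theorem coeff_bidegree_monomial_mul (a b p q : ℕ) (h : MvPowerSeries (Fin 2) A) :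
    coeff (bidegree p q) (monomial (bidegree a b) 1 * h)
      = if a ≤ p ∧ b ≤ q then coeff (bidegree (p - a) (q - b)) h else 0 := by
  classical
  rw [coeff_monomial_mul]
  by_cases hab : a ≤ p ∧ b ≤ q
  · rw [if_pos (bidegree_le_bidegree.mpr hab), if_pos hab, one_mul]
    congr 2
    exact finsupp_fin_two_ext (by simp [Finsupp.tsub_apply]) (by simp [Finsupp.tsub_apply])
  · rw [if_neg (mt bidegree_le_bidegree.mp hab), if_neg hab]

theorem coeff_inVar (k : Fin 2) (f : PowerSeries A) (m : Fin 2 →₀ ℕ) :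
    coeff m (inVar k f) = if m = Finsupp.single k (m k) then PowerSeries.coeff (m k) f else 0 := by
  classical
  simp only [coeff]
  congr

theorem coeff_inVar_mul_inVar {k l : Fin 2} (hkl : k ≠ l) (f g : PowerSeries A)
    (m : Fin 2 →₀ ℕ) :
    coeff m (inVar k f * inVar l g) = PowerSeries.coeff (m k) f * PowerSeries.coeff (m l) g := by
  classical
  have hsplit : ∀ n : Fin 2 →₀ ℕ, n = Finsupp.single k (n k) + Finsupp.single l (n l) := by
    intro n
    ext a
    fin_cases k <;> fin_cases l <;> fin_cases a <;> simp_all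
  rw [coeff_mul, Finset.sum_eq_single (Finsupp.single k (m k), Finsupp.single l (m l))]
  · simp only [coeff_inVar, Finsupp.single_eq_same, if_true]
  · rintro ⟨p, q⟩ hpq hne
    rw [Finset.HasAntidiagonal.mem_antidiagonal] at hpq
    dsimp only at hpq ⊢
    by_cases hp : p = Finsupp.single k (p k)
    · by_cases hq : q = Finsupp.single l (q l)
      · refine absurd ?_ hne
        have hk : p k = m k := by
          rw [← hpq, Finsupp.add_apply, hq, Finsupp.single_eq_of_ne hkl, add_zero]
        have hl : q l = m l := by
          rw [← hpq, Finsupp.add_apply, hp, Finsupp.single_eq_of_ne hkl.symm, zero_add]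
        rw [hp, hq, hk, hl]
      · rw [coeff_inVar l g q, if_neg hq, mul_zero]
    · rw [coeff_inVar k f p, if_neg hp, zero_mul]
  · exact fun h => absurd (Finset.HasAntidiagonal.mem_antidiagonal.mpr (hsplit m).symm) h

end TwoVariables

section QuaternaryRelation

open MvPowerSeries

variable {A : Type*} [Ring A] {N : ℕ} (s : Fin N → Fin N → PowerSeries A)

theorem coeff_inX_mul_inY (f g : PowerSeries A) (p q : ℕ) :
    coeff (bidegree p q) (inX f * inY g) = PowerSeries.coeff p f * PowerSeries.coeff q g := by
  simpa using coeff_inVar_mul_inVar (by decide : (0 : Fin 2) ≠ 1) f g (bidegree p q)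

theorem coeff_inY_mul_inX (f g : PowerSeries A) (p q : ℕ) :
    coeff (bidegree p q) (inY f * inX g) = PowerSeries.coeff q f * PowerSeries.coeff p g := by
  simpa using coeff_inVar_mul_inVar (by decide : (1 : Fin 2) ≠ 0) f g (bidegree p q)

theorem coeff_quatLHS (i j k l : Fin N) (p : ℕ) :
    coeff (bidegree (p + 2) 1) (quatLHS s i j k l)
      = -⁅PowerSeries.coeff p (s i j), PowerSeries.coeff 1 (s k l)⁆ := by
  simp only [quatLHS, Xv_pow_eq, Yv_pow_eq, sub_mul, mul_sub, map_sub,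
    coeff_bidegree_monomial_mul, Ring.lie_def, coeff_inX_mul_inY, coeff_inY_mul_inX]
  norm_num
  abel

theorem coeff_quatRHS (i j k l : Fin N) (p : ℕ) :
    coeff (bidegree (p + 2) 1) (quatRHS s i j k l)
      = PowerSeries.coeff p (s k j) * PowerSeries.coeff 0 (s i l)
          - PowerSeries.coeff 0 (s k j) * PowerSeries.coeff p (s i l)
        + (PowerSeries.coeff p (s i k) * PowerSeries.coeff 0 (s j l)
          - PowerSeries.coeff 0 (s k i) * PowerSeries.coeff p (s l j)) := by
  simp only [quatRHS, Xv_pow_mul_Yv_pow]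
  simp only [Xv_eq, Yv_eq, monomial_mul_monomial, mul_one, bidegree_add, mul_add, mul_sub,
    add_mul, sub_mul, map_add, map_sub, coeff_bidegree_monomial_mul, coeff_inX_mul_inY,
    coeff_inY_mul_inX]
  norm_num
  abel

variable {s}

/-- The coefficient of `u⁻ᵖ⁻² v⁻¹` in the quaternary relation. -/
theorem lie_coeff_coeff_one (hconst : HasDeltaConst s) (hquat : QuatRel s) (i j k l : Fin N)
    (p : ℕ) :
    ⁅PowerSeries.coeff p (s i j), PowerSeries.coeff 1 (s k l)⁆
      = (if k = j then PowerSeries.coeff p (s i l) else 0)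
        - (if i = l then PowerSeries.coeff p (s k j) else 0)
        + (if k = i then PowerSeries.coeff p (s l j) else 0)
        - (if j = l then PowerSeries.coeff p (s i k) else 0) := by
  have h := congrArg (coeff (bidegree (p + 2) 1)) (hquat i j k l)
  rw [coeff_quatLHS, coeff_quatRHS, neg_eq_iff_eq_neg] at h
  have hconst' : ∀ a b, PowerSeries.constantCoeff (s a b) = if a = b then 1 else 0 := hconst
  simp only [PowerSeries.coeff_zero_eq_constantCoeff, hconst', mul_ite, ite_mul, mul_one,
    one_mul, mul_zero, zero_mul] at h
  rw [h]
  abel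

theorem lie_C_coeff_one (hconst : HasDeltaConst s) (hquat : QuatRel s) (i j k l : Fin N) :
    ⁅s i j, PowerSeries.C (PowerSeries.coeff 1 (s k l))⁆
      = (if k = j then s i l else 0) - (if i = l then s k j else 0)
        + (if k = i then s l j else 0) - (if j = l then s i k else 0) := by
  ext p
  have h := lie_coeff_coeff_one hconst hquat i j k l p
  simp only [Ring.lie_def] at h ⊢
  simpa only [map_sub, map_add, PowerSeries.coeff_mul_C, PowerSeries.coeff_C_mul,
    apply_ite (PowerSeries.coeff p), map_zero] using h

theorem commute_C_coeff_one (hconst : HasDeltaConst s) (hquat : QuatRel s) {a b k l : Fin N}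
    (hka : k ≠ a) (hkb : k ≠ b) (hla : l ≠ a) (hlb : l ≠ b) :
    Commute (PowerSeries.C (PowerSeries.coeff 1 (s k l))) (s a b) := by
  refine (commute_iff_lie_eq.mpr ?_).symm
  rw [lie_C_coeff_one hconst hquat, if_neg hkb, if_neg hla.symm, if_neg hka, if_neg hlb.symm]
  simp

theorem lie_C_coeff_one_adjacent (hconst : HasDeltaConst s) (hquat : QuatRel s) {i j k : Fin N}
    (hij : i ≠ j) (hik : i ≠ k) (hjk : j ≠ k) :
    ⁅s i j, PowerSeries.C (PowerSeries.coeff 1 (s j k))⁆ = s i k := by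
  rw [lie_C_coeff_one hconst hquat, if_pos rfl, if_neg hik, if_neg hij.symm, if_neg hjk]
  simp

theorem C_coeff_one_lie_adjacent (hconst : HasDeltaConst s) (hquat : QuatRel s) {i j k : Fin N}
    (hij : i ≠ j) (hik : i ≠ k) (hjk : j ≠ k) :
    ⁅PowerSeries.C (PowerSeries.coeff 1 (s k j)), s j i⁆ = s k i := by
  rw [Ring.lie_def, ← neg_sub, ← Ring.lie_def, lie_C_coeff_one hconst hquat, if_neg hik.symm,
    if_pos rfl, if_neg hjk.symm, if_neg hij]
  simp

end QuaternaryRelation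

section GaussDecomposition

variable {A : Type*} [Ring A] {N : ℕ} {s : Fin N → Fin N → PowerSeries A}
  {d : Fin N → PowerSeries A} {e f : Fin N → Fin N → PowerSeries A}

theorem coeff_one_mul_eq (p q : PowerSeries A) :
    PowerSeries.coeff 1 (p * q)
      = PowerSeries.constantCoeff p * PowerSeries.coeff 1 q
        + PowerSeries.coeff 1 p * PowerSeries.constantCoeff q := by
  rw [PowerSeries.coeff_mul, show Finset.HasAntidiagonal.antidiagonal 1 = {(0, 1), (1, 0)} from rfl,
    Finset.sum_pair (by decide), PowerSeries.coeff_zero_eq_constantCoeff]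

theorem upperMat_of_lt {a b : Fin N} (hab : a < b) : upperMat e a b = e a b := by
  simp [upperMat, hab, hab.ne]

theorem lowerMat_of_lt {a b : Fin N} (hba : b < a) : lowerMat f a b = f a b := by
  simp [lowerMat, hba, hba.ne']

namespace IsGaussDecomp

theorem isLDU (hG : IsGaussDecomp s d e f) : IsLDU s (lowerMat f) d (upperMat e) where
  lower_diag a := if_pos rfl
  lower_eq_zero a c hac := by simp [lowerMat, hac.ne, hac.not_gt]
  upper_diag c := if_pos rfl
  upper_eq_zero c b hbc := by simp [upperMat, hbc.ne', hbc.not_gt]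
  isUnit c := PowerSeries.isUnit_iff_constantCoeff.mpr (by rw [hG.d_const]; exact isUnit_one)
  eq_sum a b := by
    rw [← Matrix.of_apply s a b, hG.decomp, Matrix.mul_apply]
    simp only [Matrix.mul_diagonal]

theorem coeff_one_upper (hG : IsGaussDecomp s d e f) {j k : Fin N} (hjk : j < k) :
    PowerSeries.coeff 1 (s j k) = PowerSeries.coeff 1 (e j k) := by
  rw [hG.isLDU.eq_sum_Iio_add_mul_upper, map_add, map_sum, Finset.sum_eq_zero, zero_add,
    coeff_one_mul_eq, upperMat_of_lt hjk, hG.d_const, hG.e_const j k hjk, one_mul, mul_zero,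
    add_zero]
  intro c hc
  have hcj := Finset.mem_Iio.mp hc
  rw [coeff_one_mul_eq, upperMat_of_lt (hcj.trans hjk), hG.e_const c k (hcj.trans hjk),
    map_mul, lowerMat_of_lt hcj, hG.f_const c j hcj, zero_mul, zero_mul, mul_zero, add_zero]

theorem coeff_one_lower (hG : IsGaussDecomp s d e f) {j k : Fin N} (hjk : j < k) :
    PowerSeries.coeff 1 (s k j) = PowerSeries.coeff 1 (f k j) := by
  rw [hG.isLDU.eq_sum_Iio_add_lower_mul, map_add, map_sum, Finset.sum_eq_zero, zero_add,
    coeff_one_mul_eq, lowerMat_of_lt hjk, hG.d_const, hG.f_const j k hjk, zero_mul, mul_one,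
    zero_add]
  intro c hc
  have hcj := Finset.mem_Iio.mp hc
  rw [coeff_one_mul_eq, upperMat_of_lt hcj, hG.e_const c j hcj, map_mul,
    lowerMat_of_lt (hcj.trans hjk), hG.f_const c k (hcj.trans hjk), zero_mul, zero_mul,
    mul_zero, add_zero]

theorem e_succ_eq_lie (hconst : HasDeltaConst s) (hquat : QuatRel s)
    (hG : IsGaussDecomp s d e f) {i j : Fin N} (hij : i < j) (hj : (j : ℕ) + 1 < N) :
    e i ⟨j + 1, hj⟩ = ⁅e i j, PowerSeries.C (PowerSeries.coeff 1 (e j ⟨j + 1, hj⟩))⁆ := by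
  set k : Fin N := ⟨j + 1, hj⟩
  have hjk : j < k := Fin.lt_def.mpr (Nat.lt_succ_self _)
  have h := hG.isLDU.lie_upper_eq
    (fun a b ha hb => commute_C_coeff_one hconst hquat ha.ne' hb.ne' (ha.trans hjk).ne'
      (hb.trans hjk).ne')
    (fun i hi => lie_C_coeff_one_adjacent hconst hquat hi.ne (hi.trans hjk).ne hjk.ne) i hij
  rw [upperMat_of_lt hij, upperMat_of_lt (hij.trans hjk), hG.coeff_one_upper hjk] at h
  exact h.symm

theorem f_succ_eq_lie (hconst : HasDeltaConst s) (hquat : QuatRel s)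
    (hG : IsGaussDecomp s d e f) {i j : Fin N} (hij : i < j) (hj : (j : ℕ) + 1 < N) :
    f ⟨j + 1, hj⟩ i = ⁅PowerSeries.C (PowerSeries.coeff 1 (f ⟨j + 1, hj⟩ j)), f j i⁆ := by
  set k : Fin N := ⟨j + 1, hj⟩
  have hjk : j < k := Fin.lt_def.mpr (Nat.lt_succ_self _)
  have h := hG.isLDU.lie_lower_eq
    (fun a b ha hb => commute_C_coeff_one hconst hquat (ha.trans hjk).ne' (hb.trans hjk).ne'
      ha.ne' hb.ne')
    (fun i hi => C_coeff_one_lie_adjacent hconst hquat hi.ne (hi.trans hjk).ne hjk.ne) i hij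
  rw [lowerMat_of_lt hij, lowerMat_of_lt (hij.trans hjk), hG.coeff_one_lower hjk] at h
  exact h.symm

end IsGaussDecomp

end GaussDecomposition

section CoeffsIn

variable {A : Type*} [Ring A]

def coeffsIn (S : Subring A) : Subring (PowerSeries A) where
  carrier := {p | ∀ n, PowerSeries.coeff n p ∈ S}
  mul_mem' hp hq n := by
    rw [PowerSeries.coeff_mul]
    exact sum_mem fun x _ => mul_mem (hp _) (hq _)
  one_mem' n := by
    rw [PowerSeries.coeff_one]
    split_ifs
    exacts [one_mem _, zero_mem _]
  add_mem' hp hq n := by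
    rw [map_add]
    exact add_mem (hp n) (hq n)
  zero_mem' n := by
    rw [map_zero]
    exact zero_mem _
  neg_mem' hp n := by
    rw [map_neg]
    exact neg_mem (hp n)

theorem C_mem_coeffsIn {S : Subring A} {x : A} (hx : x ∈ S) : PowerSeries.C x ∈ coeffsIn S := by
  intro n
  rw [PowerSeries.coeff_C]
  split_ifs
  exacts [hx, zero_mem _]

variable {N : ℕ} {s : Fin N → Fin N → PowerSeries A} {d : Fin N → PowerSeries A}
  {e f : Fin N → Fin N → PowerSeries A} {S : Subring A}

theorem IsGaussDecomp.mem_coeffsIn_of_lt (hconst : HasDeltaConst s) (hquat : QuatRel s)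
    (hG : IsGaussDecomp s d e f)
    (he : ∀ (k : ℕ) (hk : k + 1 < N), e ⟨k, Nat.lt_of_succ_lt hk⟩ ⟨k + 1, hk⟩ ∈ coeffsIn S)
    (hf : ∀ (k : ℕ) (hk : k + 1 < N), f ⟨k + 1, hk⟩ ⟨k, Nat.lt_of_succ_lt hk⟩ ∈ coeffsIn S)
    {i j : Fin N} (hij : i < j) : e i j ∈ coeffsIn S ∧ f j i ∈ coeffsIn S := by
  induction j using WellFoundedLT.induction with
  | _ j ih =>
  obtain ⟨j₀, hj₀, rfl⟩ : ∃ (j₀ : ℕ) (hj₀ : j₀ + 1 < N), j = ⟨j₀ + 1, hj₀⟩ :=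
    ⟨j - 1, by omega, Fin.ext (by simp only; omega)⟩
  have hij' : (i : ℕ) < j₀ + 1 := hij
  by_cases hi : (i : ℕ) = j₀
  · rw [show i = ⟨j₀, by omega⟩ from Fin.ext hi]
    exact ⟨he j₀ hj₀, hf j₀ hj₀⟩
  have hij₀ : i < ⟨j₀, by omega⟩ := Fin.lt_def.mpr (by simp only; omega)
  obtain ⟨he₀, hf₀⟩ := ih _ (Fin.lt_def.mpr (by simp)) hij₀
  rw [show e i ⟨j₀ + 1, hj₀⟩ = _ from hG.e_succ_eq_lie hconst hquat hij₀ hj₀,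
    show f ⟨j₀ + 1, hj₀⟩ i = _ from hG.f_succ_eq_lie hconst hquat hij₀ hj₀,
    Ring.lie_def, Ring.lie_def]
  have he₁ := C_mem_coeffsIn (he j₀ hj₀ 1)
  have hf₁ := C_mem_coeffsIn (hf j₀ hj₀ 1)
  exact ⟨sub_mem (mul_mem he₀ he₁) (mul_mem he₁ he₀), sub_mem (mul_mem hf₁ hf₀) (mul_mem hf₀ hf₁)⟩

theorem IsGaussDecomp.mem_coeffsIn (hconst : HasDeltaConst s) (hquat : QuatRel s)
    (hG : IsGaussDecomp s d e f) (hd : ∀ i, d i ∈ coeffsIn S)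
    (he : ∀ (k : ℕ) (hk : k + 1 < N), e ⟨k, Nat.lt_of_succ_lt hk⟩ ⟨k + 1, hk⟩ ∈ coeffsIn S)
    (hf : ∀ (k : ℕ) (hk : k + 1 < N), f ⟨k + 1, hk⟩ ⟨k, Nat.lt_of_succ_lt hk⟩ ∈ coeffsIn S)
    (a b : Fin N) :
    s a b ∈ coeffsIn S := by
  have hL : ∀ a c, lowerMat f a c ∈ coeffsIn S := by
    intro a c
    simp only [lowerMat, Matrix.of_apply]
    split_ifs with hac hca
    exacts [one_mem _, (hG.mem_coeffsIn_of_lt hconst hquat he hf hca).2, zero_mem _]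
  have hU : ∀ c b, upperMat e c b ∈ coeffsIn S := by
    intro c b
    simp only [upperMat, Matrix.of_apply]
    split_ifs with hcb hbc
    exacts [one_mem _, (hG.mem_coeffsIn_of_lt hconst hquat he hf hbc).1, zero_mem _]
  rw [hG.isLDU.eq_sum]
  exact sum_mem fun c _ => mul_mem (mul_mem (hL a c) (hd c)) (hU c b)

end CoeffsIn

theorem statement_7 {A : Type*} [Ring A] [Algebra ℂ A] {N : ℕ}
    (s : Fin N → Fin N → PowerSeries A)
    (hconst : HasDeltaConst s) (hquat : QuatRel s)
    (d : Fin N → PowerSeries A) (e f : Fin N → Fin N → PowerSeries A)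
    (hG : IsGaussDecomp s d e f) :
    (∀ (i j : Fin N) (hij : i < j) (hj : (j : ℕ) + 1 < N),
        e i ⟨(j : ℕ) + 1, hj⟩
          = ⁅e i j, PowerSeries.C (PowerSeries.coeff 1 (e j ⟨(j : ℕ) + 1, hj⟩))⁆
        ∧ f ⟨(j : ℕ) + 1, hj⟩ i
          = ⁅PowerSeries.C (PowerSeries.coeff 1 (f ⟨(j : ℕ) + 1, hj⟩ j)), f j i⁆)
    ∧ (Algebra.adjoin ℂ
          {x : A | ∃ (i j : Fin N) (n : ℕ), x = PowerSeries.coeff n (s i j)} = ⊤ →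
        Algebra.adjoin ℂ
          {x : A |
            (∃ (i : Fin N) (n : ℕ), x = PowerSeries.coeff n (d i))
            ∨ (∃ (k : ℕ) (hk : k + 1 < N) (n : ℕ),
                x = PowerSeries.coeff n (e ⟨k, by omega⟩ ⟨k + 1, hk⟩))
            ∨ (∃ (k : ℕ) (hk : k + 1 < N) (n : ℕ),
                x = PowerSeries.coeff n (f ⟨k + 1, hk⟩ ⟨k, by omega⟩))} = ⊤) := by
  refine ⟨fun i j hij hj => ⟨hG.e_succ_eq_lie hconst hquat hij hj,
    hG.f_succ_eq_lie hconst hquat hij hj⟩, fun hgen => ?_⟩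
  rw [eq_top_iff, ← hgen]
  refine Algebra.adjoin_le ?_
  rintro x ⟨a, b, n, rfl⟩
  exact hG.mem_coeffsIn (S := (Algebra.adjoin ℂ _).toSubring) hconst hquat
    (fun i n => Algebra.subset_adjoin (Or.inl ⟨i, n, rfl⟩))
    (fun k hk n => Algebra.subset_adjoin (Or.inr (Or.inl ⟨k, hk, n, rfl⟩)))
    (fun k hk n => Algebra.subset_adjoin (Or.inr (Or.inr ⟨k, hk, n, rfl⟩))) a b n

end TY
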